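/- If p : X̃ → X is a local homeomorphism, then p has unique path lifting: for any continuous maps g, h : [0,1] → X̃ with p ∘ g = p ∘ h and g(0) = h(0), we have g = h. -/

import Mathlib

open unitInterval

noncomputable section

/-- The homotopy class of a loop, as an element of the fundamental group. -/
def pathClass {X : Type*} [TopologicalSpace X] {x : X} (γ : Path x x) :
    FundamentalGroup X x :=
  FundamentalGroup.fromPath (X := TopCat.of X) (Quotient.mk (Path.Homotopic.setoid x x) γ)

/-- A continuous path in `X` starting at the basepoint `x`. -/
structure RawPath (X : Type*) [TopologicalSpace X] (x : X) where
  toFun : C(unitInterval, X)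
  source : toFun 0 = x

variable {X : Type*} [TopologicalSpace X] {x : X}

/-- The endpoint `α(1)` of a path starting at the basepoint. -/
def RawPath.endpt (α : RawPath X x) : X := α.toFun 1

/-- A raw path, as a bundled `Path` from `x` to its endpoint. -/
def RawPath.path (α : RawPath X x) : Path x α.endpt := ⟨α.toFun, α.source, rfl⟩

/-- The relation `α ∼ β` iff `α(1) = β(1)` and `[α · β⁻] ∈ H`. -/
def SpanierRel (H : Subgroup (FundamentalGroup X x)) (α β : RawPath X x) : Prop :=
  ∃ hend : α.endpt = β.endpt,
    pathClass (α.path.trans (β.path.symm.cast hend rfl)) ∈ H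

/-- The space `X̃`: paths starting at `x`, modulo `α ∼ β` iff `α(1) = β(1)`
and `[α · β⁻] ∈ H`. -/
def SpanierSpace (H : Subgroup (FundamentalGroup X x)) : Type _ :=
  Quot (SpanierRel H)

/-- The equivalence class `⟨α⟩ ∈ X̃` of a path `α` starting at `x`. -/
def SpanierSpace.mk (H : Subgroup (FundamentalGroup X x)) (α : RawPath X x) :
    SpanierSpace H :=
  Quot.mk _ α

/-- The endpoint projection `p : X̃ → X`, `p ⟨α⟩ = α(1)`. -/
def spanierProj (H : Subgroup (FundamentalGroup X x)) : SpanierSpace H → X :=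
  Quot.lift RawPath.endpt (fun _ _ hab => by obtain ⟨h, -⟩ := hab; exact h)

/-- The concatenation `α · γ` of a path `α` starting at `x` with a path `γ`
starting at `α(1)`. -/
def RawPath.extend (α : RawPath X x) {y : X} (γ : Path α.endpt y) : RawPath X x :=
  ⟨(α.path.trans γ).toContinuousMap, (α.path.trans γ).source'⟩

/-- The basic set `⟨α,U⟩ = {⟨α·γ⟩ : γ a continuous path in U with γ(0) = α(1)}`. -/
def basicSet (H : Subgroup (FundamentalGroup X x)) (α : RawPath X x) (U : Set X) :
    Set (SpanierSpace H) :=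
  {z | ∃ (y : X) (γ : Path α.endpt y), Set.range γ ⊆ U ∧ z = SpanierSpace.mk H (α.extend γ)}

/-- The topology on `X̃` generated by the basic sets `⟨α,U⟩` with `U` open
and `α(1) ∈ U`. -/
instance spanierTopology (H : Subgroup (FundamentalGroup X x)) :
    TopologicalSpace (SpanierSpace H) :=
  TopologicalSpace.generateFrom
    {S | ∃ (α : RawPath X x) (U : Set X), IsOpen U ∧ α.endpt ∈ U ∧ S = basicSet H α U}

/-- The subgroup-like subset `π(α,U) = [α]·i_#(π₁(U,α(1)))·[α]⁻¹` of `π₁(X,x)`: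
all classes `[α·γ·α⁻]` with `γ` a loop at `α(1)` inside `U`. -/
def piSet (α : RawPath X x) (U : Set X) : Set (FundamentalGroup X x) :=
  {g | ∃ γ : Path α.endpt α.endpt, Set.range γ ⊆ U ∧
    g = pathClass (α.path.trans (γ.trans α.path.symm))}

end

/-!
A local homeomorphism is locally injective, so by `IsSeparatedMap.eq_of_comp_eq` it suffices
to show that `p` separates the points of each fibre. The basic sets form a basis of `X̃`,
`⟨α,U⟩` depends only on `⟨α⟩`, and for a path `γ` in `U` both `⟨α·γ,U⟩ ⊆ ⟨α,U⟩` and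
`⟨α⟩ ∈ ⟨α·γ,U⟩` hold. Take `U` with `p` injective on `⟨α,U⟩`. If `⟨β⟩ ≠ ⟨α⟩` lies over the
same point and `w ∈ ⟨α,U⟩ ∩ ⟨β,U⟩`, then `⟨β⟩ ∈ ⟨w,U⟩ ⊆ ⟨α,U⟩`, contradicting injectivity;
so `⟨α,U⟩` and `⟨β,U⟩` are disjoint.
-/

section PathClass

variable {X : Type*} [TopologicalSpace X] {x a : X}

theorem pathClass_trans_symm_eq_one {p q : Path x a} (h : p.Homotopic q) :
    pathClass (p.trans q.symm) = 1 := by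
  change Path.Homotopic.Quotient.mk _ = Path.Homotopic.Quotient.refl x
  simp [Path.Homotopic.Quotient.eq.2 h]

theorem pathClass_trans_symm_swap (p q : Path x a) :
    pathClass (q.trans p.symm) = (pathClass (p.trans q.symm))⁻¹ := by
  change _ = Path.Homotopic.Quotient.mk (p.trans q.symm).symm
  rw [Path.trans_symm, Path.symm_symm]
  rfl

theorem pathClass_trans_trans_symm_trans {y : X} (p q : Path x a) (γ : Path a y) :
    pathClass ((p.trans γ).trans (q.trans γ).symm) = pathClass (p.trans q.symm) := by
  change Path.Homotopic.Quotient.mk _ = Path.Homotopic.Quotient.mk _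
  simp only [Path.trans_symm, Path.Homotopic.Quotient.mk_trans, Path.Homotopic.Quotient.mk_symm,
    Path.Homotopic.Quotient.trans_assoc]
  rw [← Path.Homotopic.Quotient.trans_assoc (Path.Homotopic.Quotient.mk γ),
    Path.Homotopic.Quotient.trans_symm, Path.Homotopic.Quotient.refl_trans]

end PathClass

section SpanierRel

variable {X : Type*} [TopologicalSpace X] {x : X} {H : Subgroup (FundamentalGroup X x)}

theorem RawPath.endpt_extend (α : RawPath X x) {y : X} (γ : Path α.endpt y) :
    (α.extend γ).endpt = y :=
  (α.path.trans γ).target'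

theorem spanierRel_iff_of_endpt_eq {α β : RawPath X x} {y : X} (hα : α.endpt = y)
    (hβ : β.endpt = y) :
    SpanierRel H α β ↔
      pathClass ((α.path.cast rfl hα.symm).trans (β.path.cast rfl hβ.symm).symm) ∈ H :=
  ⟨fun ⟨_, hm⟩ => hm, fun hm => ⟨hα.trans hβ.symm, hm⟩⟩

theorem spanierRel_symm {α β : RawPath X x} (h : SpanierRel H α β) : SpanierRel H β α := by
  obtain ⟨hend, hm⟩ := h
  rw [spanierRel_iff_of_endpt_eq hend.symm rfl, pathClass_trans_symm_swap]
  exact H.inv_mem hm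

theorem spanierRel_extend {α β : RawPath X x} (h : SpanierRel H α β) {y : X}
    (γ : Path α.endpt y) : SpanierRel H (α.extend γ) (β.extend (γ.cast h.1.symm rfl)) := by
  obtain ⟨hend, hm⟩ := h
  rw [spanierRel_iff_of_endpt_eq (α.endpt_extend γ) (β.endpt_extend _)]
  exact (pathClass_trans_trans_symm_trans α.path (β.path.cast rfl hend) γ).symm ▸ hm

end SpanierRel

namespace SpanierSpace

variable {X : Type*} [TopologicalSpace X] {x : X} {H : Subgroup (FundamentalGroup X x)}

theorem mk_eq_of_homotopic {α β : RawPath X x} {y : X} (hα : α.endpt = y) (hβ : β.endpt = y)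
    (hαβ : (α.path.cast rfl hα.symm).Homotopic (β.path.cast rfl hβ.symm)) :
    mk H α = mk H β :=
  Quot.sound <| (spanierRel_iff_of_endpt_eq hα hβ).2 <| by
    rw [pathClass_trans_symm_eq_one hαβ]
    exact H.one_mem

theorem mk_extend_refl (α : RawPath X x) : mk H (α.extend (Path.refl α.endpt)) = mk H α :=
  mk_eq_of_homotopic (α.endpt_extend _) rfl (.trans_refl α.path)

theorem mk_extend_extend (α : RawPath X x) {c y : X} (γ : Path α.endpt c)
    (δ : Path (α.extend γ).endpt y) :
    mk H ((α.extend γ).extend δ) =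
      mk H (α.extend (γ.trans (δ.cast (α.endpt_extend γ).symm rfl))) :=
  mk_eq_of_homotopic ((α.extend γ).endpt_extend δ) (α.endpt_extend _)
    (.trans_assoc α.path γ (δ.cast (α.endpt_extend γ).symm rfl))

theorem mk_extend_extend_symm (α : RawPath X x) {y : X} (γ : Path α.endpt y) :
    mk H ((α.extend γ).extend (γ.symm.cast (α.endpt_extend γ) rfl)) = mk H α :=
  mk_eq_of_homotopic ((α.extend γ).endpt_extend _) rfl <|
    (Path.Homotopic.trans_assoc α.path γ γ.symm).trans
      ((Path.Homotopic.hcomp (.refl α.path) (.trans_symm γ)).trans (.trans_refl α.path))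

end SpanierSpace

section BasicSet

open SpanierSpace

variable {X : Type*} [TopologicalSpace X] {x : X} {H : Subgroup (FundamentalGroup X x)}

theorem spanierProj_mk (α : RawPath X x) : spanierProj H (mk H α) = α.endpt := rfl

theorem mem_basicSet_self {α : RawPath X x} {U : Set X} (h : α.endpt ∈ U) :
    mk H α ∈ basicSet H α U :=
  ⟨α.endpt, Path.refl _, by simpa using h, (mk_extend_refl α).symm⟩

theorem basicSet_mono (α : RawPath X x) {U V : Set X} (hUV : U ⊆ V) :
    basicSet H α U ⊆ basicSet H α V := by
  rintro z ⟨y, γ, hγ, rfl⟩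
  exact ⟨y, γ, hγ.trans hUV, rfl⟩

theorem spanierProj_mem_of_mem_basicSet {α : RawPath X x} {U : Set X} {z : SpanierSpace H}
    (hz : z ∈ basicSet H α U) : spanierProj H z ∈ U := by
  obtain ⟨y, γ, hγ, rfl⟩ := hz
  rw [spanierProj_mk, RawPath.endpt_extend]
  exact hγ ⟨1, γ.target⟩

theorem basicSet_subset_of_spanierRel {α β : RawPath X x} (h : SpanierRel H α β) (U : Set X) :
    basicSet H α U ⊆ basicSet H β U := by
  rintro z ⟨y, γ, hγ, rfl⟩
  exact ⟨y, γ.cast h.1.symm rfl, by simpa using hγ, Quot.sound (spanierRel_extend h γ)⟩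

theorem basicSet_eq_of_mk_eq {α β : RawPath X x} (h : mk H α = mk H β) (U : Set X) :
    basicSet H α U = basicSet H β U :=
  congrArg (Quot.lift (basicSet H · U) fun _ _ hr =>
    (basicSet_subset_of_spanierRel hr U).antisymm
      (basicSet_subset_of_spanierRel (spanierRel_symm hr) U)) h

theorem basicSet_extend_subset (α : RawPath X x) {U : Set X} {y : X} {γ : Path α.endpt y}
    (hγ : Set.range γ ⊆ U) : basicSet H (α.extend γ) U ⊆ basicSet H α U := by
  rintro z ⟨y', δ, hδ, rfl⟩
  refine ⟨y', γ.trans (δ.cast (α.endpt_extend γ).symm rfl), ?_, mk_extend_extend α γ δ⟩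
  rw [Path.trans_range]
  exact Set.union_subset hγ (by simpa using hδ)

theorem mk_mem_basicSet_extend (α : RawPath X x) {U : Set X} {y : X} {γ : Path α.endpt y}
    (hγ : Set.range γ ⊆ U) : mk H α ∈ basicSet H (α.extend γ) U :=
  ⟨α.endpt, γ.symm.cast (α.endpt_extend γ) rfl, by simpa using hγ,
    (mk_extend_extend_symm α γ).symm⟩

theorem basicSet_subset_of_mem {α β : RawPath X x} {U : Set X}
    (h : mk H α ∈ basicSet H β U) : basicSet H α U ⊆ basicSet H β U := by
  obtain ⟨y, γ, hγ, hαγ⟩ := h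
  rw [basicSet_eq_of_mk_eq hαγ]
  exact basicSet_extend_subset β hγ

theorem isOpen_basicSet {α : RawPath X x} {U : Set X} (hU : IsOpen U) (hα : α.endpt ∈ U) :
    IsOpen (basicSet H α U) :=
  TopologicalSpace.isOpen_generateFrom_of_mem ⟨α, U, hU, hα, rfl⟩

theorem isTopologicalBasis_basicSet :
    TopologicalSpace.IsTopologicalBasis
      {S : Set (SpanierSpace H) | ∃ (α : RawPath X x) (U : Set X),
        IsOpen U ∧ α.endpt ∈ U ∧ S = basicSet H α U} where
  exists_subset_inter := by
    rintro _ ⟨α, U, hU, -, rfl⟩ _ ⟨β, V, hV, -, rfl⟩ z ⟨hzα, hzβ⟩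
    obtain ⟨δ, rfl⟩ := Quot.exists_rep z
    have hδ : δ.endpt ∈ U ∩ V :=
      ⟨spanierProj_mem_of_mem_basicSet hzα, spanierProj_mem_of_mem_basicSet hzβ⟩
    refine ⟨basicSet H δ (U ∩ V), ⟨δ, _, hU.inter hV, hδ, rfl⟩, mem_basicSet_self hδ,
      Set.subset_inter ?_ ?_⟩
    · exact (basicSet_mono δ Set.inter_subset_left).trans (basicSet_subset_of_mem hzα)
    · exact (basicSet_mono δ Set.inter_subset_right).trans (basicSet_subset_of_mem hzβ)
  sUnion_eq := Set.eq_univ_of_forall fun z => by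
    obtain ⟨α, rfl⟩ := Quot.exists_rep z
    exact ⟨_, ⟨α, Set.univ, isOpen_univ, trivial, rfl⟩, mem_basicSet_self trivial⟩
  eq_generateFrom := rfl

theorem exists_basicSet_subset {S : Set (SpanierSpace H)} (hS : IsOpen S) {α : RawPath X x}
    (hα : mk H α ∈ S) : ∃ U, IsOpen U ∧ α.endpt ∈ U ∧ basicSet H α U ⊆ S := by
  obtain ⟨_, ⟨β, U, hU, -, rfl⟩, hαβ, hβS⟩ :=
    isTopologicalBasis_basicSet.exists_subset_of_mem_open hα hS
  exact ⟨U, hU, spanierProj_mem_of_mem_basicSet hαβ, (basicSet_subset_of_mem hαβ).trans hβS⟩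

theorem isSeparatedMap_spanierProj (hinj : IsLocallyInjective (spanierProj H)) :
    IsSeparatedMap (spanierProj H) := by
  intro z₁ z₂ hp hne
  obtain ⟨α, rfl⟩ := Quot.exists_rep z₁
  obtain ⟨β, rfl⟩ := Quot.exists_rep z₂
  obtain ⟨N, hN, hαN, hNinj⟩ := hinj (mk H α)
  obtain ⟨U, hU, hαU, hUN⟩ := exists_basicSet_subset hN hαN
  have hend : α.endpt = β.endpt := hp
  have hβU : β.endpt ∈ U := hend ▸ hαU
  refine ⟨basicSet H α U, basicSet H β U, isOpen_basicSet hU hαU, isOpen_basicSet hU hβU,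
    mem_basicSet_self hαU, mem_basicSet_self hβU, Set.disjoint_left.2 ?_⟩
  rintro _ ⟨y, γ, hγ, rfl⟩ ⟨y', δ, hδ, hγδ⟩
  have hβα : mk H β ∈ basicSet H α U :=
    basicSet_extend_subset α hγ (basicSet_eq_of_mk_eq hγδ U ▸ mk_mem_basicSet_extend β hδ)
  exact hne (hNinj hαN (hUN hβα) hp)

end BasicSet

/-- If `p : X̃ → X` is a local homeomorphism, then it has unique path lifting:
continuous paths `g, h : [0,1] → X̃` with `p ∘ g = p ∘ h` and `g 0 = h 0` coincide. -/
theorem spanierProj_unique_path_lifting_of_isLocalHomeomorph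
    {X : Type*} [TopologicalSpace X] {x : X} (H : Subgroup (FundamentalGroup X x))
    (hp : IsLocalHomeomorph (spanierProj H))
    {g h : unitInterval → SpanierSpace H} (hg : Continuous g) (hh : Continuous h)
    (hcomp : spanierProj H ∘ g = spanierProj H ∘ h) (h0 : g 0 = h 0) : g = h :=
  (isSeparatedMap_spanierProj hp.isLocallyInjective).eq_of_comp_eq
    hp.isLocallyInjective hg hh hcomp 0 h0
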